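/- arXiv:1410.7205 — 2 statements merged into one kernel-verified Lean document; each statement's English description precedes it below -/
import Mathlib

section
/- Let 0 < p < 1 and let N be a natural number. Suppose Phi : G -> R is given by Phi(tau) = integral_{I_N} a(t + tau, t) d mu(t), where a is a p-atom supported on I_N x I_N with ||a||_infty <= 2^{2N/p}, and suppose hat{Phi}(n) = 0 for n < 2^N. Then sum_{n=1}^{infinity} |hat{Phi}(n)|^p / n^{3-2p} <= c_p for a constant c_p depending only on p. -/
open MeasureTheory

noncomputable section

/-- The Walsh group: countable product of `ZMod 2`. -/
abbrev G : Type := ℕ → ZMod 2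

instance : MeasurableSpace (ZMod 2) := ⊤

/-- Walsh-Paley function `w n`. -/
def walsh (n : ℕ) (x : G) : ℝ :=
  ∏ k ∈ Finset.range (n + 1), if n.testBit k ∧ x k = 1 then -1 else 1

/-- Walsh-Dirichlet kernel `D n`. -/
def dirichlet (n : ℕ) (x : G) : ℝ := ∑ k ∈ Finset.range n, walsh k x

/-- Dyadic interval `I_n` (centered at `0`). -/
def Icyl (n : ℕ) : Set G := {x : G | ∀ k < n, x k = 0}

/-- `μ` is the normalized Haar (fair-coin product) measure on `G`:
it gives each cylinder of depth `n` measure `2⁻ⁿ`. -/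
def IsStdHaar (μ : Measure G) : Prop :=
  ∀ (n : ℕ) (x : G), μ {y : G | ∀ k < n, y k = x k} = 2⁻¹ ^ n


/-- A `p`-atom supported on the square `I_N × I_N`. -/
def IsPAtom (μ : Measure G) (p : ℝ) (N : ℕ) (a : G × G → ℝ) : Prop :=
  Measurable a ∧
    (∀ z : G × G, z ∉ Icyl N ×ˢ Icyl N → a z = 0) ∧
    (∫ z, a z ∂(μ.prod μ)) = 0 ∧
    ∀ z, |a z| ≤ (2 : ℝ) ^ ((2 * N : ℝ) / p)

/-- Two-dimensional Walsh-Fourier coefficient. -/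
def fourierCoef (μ : Measure G) (a : G × G → ℝ) (i j : ℕ) : ℝ :=
  ∫ z, a z * walsh i z.1 * walsh j z.2 ∂(μ.prod μ)

/-- Quadratical partial sum `S_{n,n} a` of the two-dimensional Walsh-Fourier series. -/
def sqPartialSum (μ : Measure G) (a : G × G → ℝ) (n : ℕ) (z : G × G) : ℝ :=
  ∑ i ∈ Finset.range n, ∑ j ∈ Finset.range n,
    fourierCoef μ a i j * walsh i z.1 * walsh j z.2


lemma sum_Ico_rpow_le {s : ℝ} (hs : 1 < s) {a : ℕ} (ha : 1 ≤ a) (K : ℕ) :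
    ∑ i ∈ Finset.Ico a K, ((i : ℝ) + 1) ^ (-s) ≤ (a : ℝ) ^ (1 - s) / (s - 1) := by
  have hs0 : 0 < s - 1 := by linarith
  have ha0 : (0 : ℝ) < a := by exact_mod_cast ha
  rcases le_or_gt K a with h | h
  · rw [Finset.Ico_eq_empty (by omega)]
    simp only [Finset.sum_empty]
    positivity
  · have hab : a ≤ K := h.le
    have hanti : AntitoneOn (fun x : ℝ => x ^ (-s)) (Set.Icc (a : ℝ) (K : ℝ)) := by
      intro x hx y hy hxy
      exact Real.rpow_le_rpow_of_nonpos (lt_of_lt_of_le ha0 hx.1) hxy (by linarith)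
    have key := AntitoneOn.sum_le_integral_Ico hab hanti
    simp only [Nat.cast_add, Nat.cast_one] at key
    refine key.trans ?_
    rw [integral_rpow (Or.inr ⟨by intro h'; linarith [neg_eq_iff_eq_neg.mp h'], by
      rw [Set.uIcc_of_le (by exact_mod_cast hab)]
      intro h0
      exact absurd h0.1 (by linarith)⟩)]
    have e1 : -s + 1 = 1 - s := by ring
    have hK : (0:ℝ) ≤ (K:ℝ) ^ (1-s) := Real.rpow_nonneg (by positivity) _
    have e2 : ((K:ℝ) ^ (-s+1) - (a:ℝ) ^ (-s+1)) / (-s+1) =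
        ((a:ℝ) ^ (1-s) - (K:ℝ) ^ (1-s)) / (s-1) := by
      rw [e1, show (1 - s) = -(s-1) by ring, div_neg, ← neg_div, neg_sub]
    rw [e2, sub_div]
    have := div_nonneg hK hs0.le
    linarith

lemma tail_rpow_le {s : ℝ} (hs : 1 < s) (N K : ℕ) :
    ∑ i ∈ Finset.Ico (2 ^ N - 1) K, ((i : ℝ) + 1) ^ (-s)
      ≤ ((2:ℝ) ^ (s-1) / (s-1) + 1) * ((2:ℝ) ^ N) ^ (1-s) := by
  have hs0 : 0 < s - 1 := by linarith
  have h2s : (1:ℝ) ≤ (2:ℝ) ^ (s-1) := Real.one_le_rpow one_le_two hs0.le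
  rcases Nat.eq_zero_or_pos N with hN | hN
  · subst hN
    simp only [pow_zero, Nat.sub_self, Real.one_rpow, mul_one]
    rcases Nat.eq_zero_or_pos K with hK | hK
    · subst hK; simp only [Finset.Ico_self, Finset.sum_empty]; positivity
    · rw [Finset.sum_eq_sum_Ico_succ_bot hK]
      have h1 : ((0:ℕ):ℝ) + 1 = 1 := by norm_num
      rw [h1, Real.one_rpow]
      have := sum_Ico_rpow_le hs (le_refl 1) K
      have h1s : ((1:ℕ):ℝ) ^ (1-s) = 1 := by norm_num
      rw [h1s] at this
      have : (1:ℝ)/(s-1) ≤ (2:ℝ)^(s-1)/(s-1) := by gcongr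
      linarith [sum_Ico_rpow_le hs (le_refl 1) K, h1s]
  · have h2N : (2:ℕ) ≤ 2 ^ N := by
      calc (2:ℕ) = 2 ^ 1 := (pow_one 2).symm
      _ ≤ 2 ^ N := Nat.pow_le_pow_right (by norm_num) hN
    have ha : 1 ≤ 2 ^ N - 1 := by omega
    have key := sum_Ico_rpow_le hs ha K
    refine key.trans ?_
    have hcast : ((2 ^ N - 1 : ℕ) : ℝ) = (2:ℝ) ^ N - 1 := by
      push_cast [Nat.cast_sub (by omega : 1 ≤ 2 ^ N)]; ring
    have h2R : (2:ℝ) ≤ (2:ℝ) ^ N := by exact_mod_cast h2N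
    have hhalf : (2:ℝ) ^ N / 2 ≤ ((2 ^ N - 1 : ℕ) : ℝ) := by rw [hcast]; linarith
    have hpos : (0:ℝ) < (2:ℝ) ^ N / 2 := by positivity
    have hb : ((2 ^ N - 1 : ℕ) : ℝ) ^ (1-s) ≤ ((2:ℝ) ^ N / 2) ^ (1-s) :=
      Real.rpow_le_rpow_of_nonpos hpos hhalf (by linarith)
    have hdiv : ((2:ℝ) ^ N / 2) ^ (1-s) = (2:ℝ) ^ (s-1) * ((2:ℝ) ^ N) ^ (1-s) := by
      rw [Real.div_rpow (by positivity) (by norm_num),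
        show (1-s) = -(s-1) by ring, Real.rpow_neg (by norm_num : (0:ℝ) ≤ 2),
        div_eq_mul_inv, inv_inv, mul_comm]
    have hfin : (0:ℝ) ≤ ((2:ℝ) ^ N) ^ (1-s) := Real.rpow_nonneg (by positivity) _
    calc ((2 ^ N - 1 : ℕ) : ℝ) ^ (1-s) / (s-1)
        ≤ ((2:ℝ) ^ (s-1) * ((2:ℝ) ^ N) ^ (1-s)) / (s-1) := by
          rw [← hdiv]; gcongr
      _ ≤ ((2:ℝ) ^ (s-1) / (s-1) + 1) * ((2:ℝ) ^ N) ^ (1-s) := by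
          rw [add_mul, one_mul, div_mul_eq_mul_div]
          linarith

lemma measurableSet_Icyl (N : ℕ) : MeasurableSet (Icyl N) := by
  have : Icyl N = ⋂ k ∈ Finset.range N, (fun x : G => x k) ⁻¹' {0} := by
    ext x
    simp [Icyl, Set.mem_iInter]
  rw [this]
  exact Finset.measurableSet_biInter _ fun k _ =>
    (measurable_pi_apply k) (by trivial)

lemma abs_walsh_le_one (n : ℕ) (x : G) : |walsh n x| ≤ 1 := by
  rw [walsh, Finset.abs_prod]
  apply Finset.prod_le_one (fun k _ => abs_nonneg _) (fun k _ => ?_)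
  split <;> simp

/-- Bound on `∑_n |Φ̂(n)|^p / n^{3-2p}` for `Φ(τ) = ∫_{I_N} a(t+τ,t) dμ(t)`, `a` a `p`-atom. -/
theorem tsum_fourier_coef_rpow_le (p : ℝ) (hp0 : 0 < p) (hp1 : p < 1) :
    ∃ c : ℝ, 0 < c ∧ ∀ (μ : Measure G), IsStdHaar μ → ∀ (N : ℕ) (a : G × G → ℝ),
      IsPAtom μ p N a →
      (∀ n < 2 ^ N,
        (∫ τ, (∫ t in Icyl N, a (t + τ, t) ∂μ) * walsh n τ ∂μ) = 0) →
      (∑' n : ℕ,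
          |∫ τ, (∫ t in Icyl N, a (t + τ, t) ∂μ) * walsh (n + 1) τ ∂μ| ^ p /
            ((n : ℝ) + 1) ^ (3 - 2 * p)) ≤ c := by
  set s : ℝ := 3 - 2 * p with hs_def
  have hs1 : 1 < s := by rw [hs_def]; linarith
  have hs0 : 0 < s - 1 := by linarith
  refine ⟨(2:ℝ) ^ (s-1) / (s-1) + 1, by positivity, ?_⟩
  intro μ hμ N a ha hvan
  set Φ : G → ℝ := fun τ => ∫ t in Icyl N, a (t + τ, t) ∂μ with hΦ_def
  -- basic measure facts
  have hprob : IsProbabilityMeasure μ := by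
    constructor
    have h0 := hμ 0 0
    simpa using h0
  have hμI : μ (Icyl N) = 2⁻¹ ^ N := by
    have := hμ N 0
    simpa [Icyl] using this
  have hμIlt : μ (Icyl N) < ⊤ := by
    rw [hμI]
    exact ENNReal.pow_lt_top (by simp)
  set mN : ℝ := (μ (Icyl N)).toReal with hmN_def
  have hmN : mN = ((2:ℝ)⁻¹) ^ N := by
    rw [hmN_def, hμI]
    simp [ENNReal.toReal_pow]
  have hmN0 : 0 ≤ mN := ENNReal.toReal_nonneg
  set A : ℝ := (2:ℝ) ^ ((2 * N : ℝ) / p) with hA_def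
  have hA0 : 0 ≤ A := le_of_lt (Real.rpow_pos_of_pos two_pos _)
  -- pointwise bound on Φ
  have hΦbound : ∀ τ, |Φ τ| ≤ A * mN := by
    intro τ
    rw [← Real.norm_eq_abs]
    exact norm_setIntegral_le_of_norm_le_const hμIlt
      (fun t _ => by rw [Real.norm_eq_abs]; exact ha.2.2.2 (t + τ, t))
  -- Φ vanishes off Icyl N
  have hΦzero : ∀ τ, τ ∉ Icyl N → Φ τ = 0 := by
    intro τ hτ
    show (∫ t in Icyl N, a (t + τ, t) ∂μ) = 0
    rw [setIntegral_congr_fun (measurableSet_Icyl N) (g := fun _ => (0:ℝ)) ?_,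
      integral_zero]
    intro t ht
    apply ha.2.1
    intro hmem
    apply hτ
    intro k hk
    have h1 := hmem.1 k hk
    have h2 := ht k hk
    have h1' : t k + τ k = 0 := h1
    rw [h2, zero_add] at h1'
    exact h1'
  -- coefficient bound
  have hcoef : ∀ m, |∫ τ, Φ τ * walsh m τ ∂μ| ≤ A * mN * mN := by
    intro m
    calc |∫ τ, Φ τ * walsh m τ ∂μ| ≤ ∫ τ, ‖Φ τ * walsh m τ‖ ∂μ := by
          rw [← Real.norm_eq_abs]; exact norm_integral_le_integral_norm _
      _ ≤ ∫ τ, (Icyl N).indicator (fun _ => A * mN) τ ∂μ := by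
          apply integral_mono_of_nonneg (Filter.Eventually.of_forall fun τ => norm_nonneg _)
            ((integrable_const _).indicator (measurableSet_Icyl N))
            (Filter.Eventually.of_forall fun τ => ?_)
          show ‖Φ τ * walsh m τ‖ ≤ (Icyl N).indicator (fun _ => A * mN) τ
          by_cases hτ : τ ∈ Icyl N
          · rw [Set.indicator_of_mem hτ, Real.norm_eq_abs, abs_mul]
            calc |Φ τ| * |walsh m τ| ≤ (A * mN) * 1 :=
                  mul_le_mul (hΦbound τ) (abs_walsh_le_one m τ) (abs_nonneg _)
                    (by positivity)
              _ = A * mN := mul_one _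
          · rw [Set.indicator_of_notMem hτ, hΦzero τ hτ]
            simp
      _ = A * mN * mN := by
          rw [integral_indicator_const _ (measurableSet_Icyl N), measureReal_def, ← hmN_def,
            smul_eq_mul]
          ring
  -- the uniform coefficient bound, raised to power p
  set B : ℝ := (2:ℝ) ^ (2*(N:ℝ) - 2*(N:ℝ)*p) with hB_def
  have hB0 : 0 ≤ B := (Real.rpow_pos_of_pos two_pos _).le
  have hDp : (A * mN * mN) ^ p = B := by
    rw [hmN, hA_def, show ((2:ℝ)⁻¹) ^ N = (2:ℝ) ^ (-(N:ℝ)) by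
      rw [Real.rpow_neg (by norm_num : (0:ℝ) ≤ 2), Real.rpow_natCast, inv_pow],
      ← Real.rpow_add two_pos, ← Real.rpow_add two_pos,
      ← Real.rpow_mul (le_of_lt two_pos), hB_def]
    congr 1
    field_simp
    ring
  have hcoefp : ∀ m, |∫ τ, Φ τ * walsh m τ ∂μ| ^ p ≤ B := fun m => by
    rw [← hDp]
    exact Real.rpow_le_rpow (abs_nonneg _) (hcoef m) hp0.le
  -- dominating sequence
  set g : ℕ → ℝ := fun n => if n + 1 < 2^N then 0 else B * ((n:ℝ)+1) ^ (-s) with hg_def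
  have hden_pos : ∀ n : ℕ, (0:ℝ) < ((n:ℝ)+1) ^ s :=
    fun n => Real.rpow_pos_of_pos (by positivity) _
  have hle : ∀ n : ℕ,
      |∫ τ, (∫ t in Icyl N, a (t + τ, t) ∂μ) * walsh (n + 1) τ ∂μ| ^ p /
        ((n : ℝ) + 1) ^ s ≤ g n := by
    intro n
    by_cases h : n + 1 < 2^N
    · rw [hvan (n+1) h, hg_def]
      simp only [abs_zero, Real.zero_rpow hp0.ne', zero_div, if_pos h]
      exact le_refl 0
    · rw [hg_def]
      simp only [if_neg h]
      rw [Real.rpow_neg (by positivity : (0:ℝ) ≤ (n:ℝ)+1), ← div_eq_mul_inv]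
      exact (div_le_div_iff_of_pos_right (hden_pos n)).2 (hcoefp (n+1))
  have hg_nonneg : ∀ n, 0 ≤ g n := by
    intro n
    simp only [hg_def]
    split
    · exact le_refl 0
    · positivity
  have hmaj : Summable (fun n : ℕ => B * ((n:ℝ)+1) ^ (-s)) := by
    apply Summable.mul_left
    have h1 := (Real.summable_one_div_nat_add_rpow 1 s).2 hs1
    refine h1.congr fun n => ?_
    rw [abs_of_pos (by positivity : (0:ℝ) < (n:ℝ)+1), one_div,
      ← Real.rpow_neg (by positivity : (0:ℝ) ≤ (n:ℝ)+1)]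
  have hg_sum : Summable g := by
    refine Summable.of_nonneg_of_le hg_nonneg (fun n => ?_) hmaj
    simp only [hg_def]
    split
    · positivity
    · exact le_refl _
  have hh_sum : Summable (fun n : ℕ =>
      |∫ τ, (∫ t in Icyl N, a (t + τ, t) ∂μ) * walsh (n + 1) τ ∂μ| ^ p /
        ((n : ℝ) + 1) ^ s) := by
    refine Summable.of_nonneg_of_le (fun n => ?_) hle hg_sum
    exact div_nonneg (Real.rpow_nonneg (abs_nonneg _) _) (hden_pos n).le
  refine (Summable.tsum_le_tsum hle hh_sum hg_sum).trans ?_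
  have hB1 : B * ((2:ℝ)^N) ^ (1-s) = 1 := by
    rw [hB_def, ← Real.rpow_natCast 2 N, ← Real.rpow_mul (le_of_lt two_pos),
      ← Real.rpow_add two_pos,
      show (2*(N:ℝ) - 2*(N:ℝ)*p) + (N:ℝ)*(1-s) = 0 by rw [hs_def]; ring,
      Real.rpow_zero]
  apply Summable.tsum_le_of_sum_le hg_sum
  intro F
  have hone : 1 ≤ 2^N := Nat.one_le_two_pow
  have hsub : F.filter (fun n => 2^N ≤ n + 1) ⊆ Finset.Ico (2^N - 1) (F.sup id + 1) := by
    intro n hn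
    rw [Finset.mem_filter] at hn
    rw [Finset.mem_Ico]
    exact ⟨by omega, Nat.lt_succ_of_le (Finset.le_sup (f := id) hn.1)⟩
  have e1 : ∑ n ∈ F, g n =
      ∑ n ∈ F.filter (fun n => 2^N ≤ n + 1), B * ((n:ℝ)+1) ^ (-s) := by
    rw [Finset.sum_filter]
    refine Finset.sum_congr rfl fun n _ => ?_
    simp only [hg_def]
    by_cases h : n + 1 < 2^N
    · rw [if_pos h, if_neg (by omega)]
    · rw [if_neg h, if_pos (by omega)]
  rw [e1]
  calc ∑ n ∈ F.filter (fun n => 2^N ≤ n + 1), B * ((n:ℝ)+1) ^ (-s)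
      ≤ ∑ n ∈ Finset.Ico (2^N - 1) (F.sup id + 1), B * ((n:ℝ)+1) ^ (-s) :=
        Finset.sum_le_sum_of_subset_of_nonneg hsub (fun n _ _ => by positivity)
    _ = B * ∑ n ∈ Finset.Ico (2^N - 1) (F.sup id + 1), ((n:ℝ)+1) ^ (-s) :=
        (Finset.mul_sum _ _ _).symm
    _ ≤ B * (((2:ℝ) ^ (s-1) / (s-1) + 1) * ((2:ℝ)^N) ^ (1-s)) :=
        mul_le_mul_of_nonneg_left (tail_rpow_le hs1 N _) hB0
    _ = ((2:ℝ) ^ (s-1) / (s-1) + 1) * (B * ((2:ℝ)^N) ^ (1-s)) := by ring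
    _ = (2:ℝ) ^ (s-1) / (s-1) + 1 := by rw [hB1, mul_one]

end
end

section
/- Let 0 < p < 1 and let a be a p-atom on G x G supported on I_N x I_N. For (x,y) in the complement of I_N times the complement of I_N and any n, the quadratical partial sum factorizes as S_{n,n}a(x,y) = w_n(x+y) · (sum_{i=0}^{N-1} n_i w_{2^i}(x) D_{2^i}(x)) · (sum_{j=0}^{N-1} n_j w_{2^j}(y) D_{2^j}(y)) · hat{Phi}(n), where Phi(tau) = integral_{I_N} a(t + tau, t) d mu(t) and hat{Phi}(n) is its n-th Walsh-Fourier coefficient. -/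
/-!
Since `w_k(x + s) = w_k(x) w_k(s)`, the partial sum is
`S_{n,n} a(x, y) = ∫ a(s, t) D_n(x + s) D_n(y + t)`. Splitting off the top binary digit of `n`
gives `D_n = w_n ∑_j n_j w_{2^j} D_{2^j}`, and `D_{2^j} = 2^j 𝟙_{I_j}`. For `x ∉ I_N` and
`s ∈ I_N` the point `x + s` lies outside `I_N ⊇ I_j` for `j ≥ N`, so these terms vanish, while
for `j < N` neither `w_{2^j}` nor `D_{2^j}` sees `s`; hence
`D_n(x + s) = w_n(x) w_n(s) ∑_{j<N} n_j w_{2^j}(x) D_{2^j}(x)`. On the support `I_N × I_N` of `a`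
the integral thus factors, leaving the diagonal coefficient `∫ a(s, t) w_n(s + t)`, which the
shear `(t, τ) ↦ (t + τ, t)`, measure preserving because Haar measure is translation invariant,
turns into `Φ̂(n)`.
-/

open MeasureTheory

noncomputable section

lemma zmod_two_eq_zero_or_one (v : ZMod 2) : v = 0 ∨ v = 1 := by
  revert v; decide

lemma mem_Icyl_succ {j : ℕ} {x : G} : x ∈ Icyl (j + 1) ↔ x ∈ Icyl j ∧ x j = 0 :=
  Nat.forall_lt_succ_right

lemma Icyl_antitone : Antitone Icyl :=
  fun _ _ hij _ hx k hk => hx k (lt_of_lt_of_le hk hij)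

lemma add_mem_Icyl_iff {N : ℕ} {x s : G} (hs : s ∈ Icyl N) : x + s ∈ Icyl N ↔ x ∈ Icyl N := by
  refine forall₂_congr fun k hk => ?_
  rw [Pi.add_apply, hs k hk, add_zero]

lemma walsh_eq_prod_range {n M : ℕ} (hn : n < 2 ^ M) (x : G) :
    walsh n x = ∏ k ∈ Finset.range M, if n.testBit k ∧ x k = 1 then -1 else 1 := by
  have extend : ∀ {A B : ℕ}, n < 2 ^ A → A ≤ B →
      (∏ k ∈ Finset.range A, if n.testBit k ∧ x k = 1 then (-1 : ℝ) else 1) =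
        ∏ k ∈ Finset.range B, if n.testBit k ∧ x k = 1 then -1 else 1 := by
    intro A B hA hAB
    refine Finset.prod_subset (Finset.range_subset_range.2 hAB) fun k _ hk => ?_
    have hlt : n < 2 ^ k :=
      hA.trans_le (Nat.pow_le_pow_right two_pos (not_lt.1 (Finset.mem_range.not.1 hk)))
    simp [Nat.testBit_lt_two_pow hlt]
  have hn' : n < 2 ^ (n + 1) := Nat.lt_two_pow_self.trans (Nat.pow_lt_pow_succ one_lt_two)
  rw [walsh, extend hn' (Nat.le_add_right _ M), ← extend hn (Nat.le_add_left M _)]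

lemma walsh_add (n : ℕ) (x y : G) : walsh n (x + y) = walsh n x * walsh n y := by
  rw [walsh, walsh, walsh, ← Finset.prod_mul_distrib]
  refine Finset.prod_congr rfl fun k _ => ?_
  rw [Pi.add_apply]
  rcases zmod_two_eq_zero_or_one (x k) with hx | hx <;>
    rcases zmod_two_eq_zero_or_one (y k) with hy | hy <;> cases n.testBit k <;>
    simp [hx, hy]

lemma abs_walsh (n : ℕ) (x : G) : |walsh n x| = 1 := by
  rw [walsh, Finset.abs_prod]
  exact Finset.prod_eq_one fun k _ => by split_ifs <;> norm_num

lemma walsh_mul_self (n : ℕ) (x : G) : walsh n x * walsh n x = 1 := by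
  rw [← abs_mul_abs_self, abs_walsh, one_mul]

lemma walsh_two_pow (j : ℕ) (x : G) : walsh (2 ^ j) x = if x j = 1 then -1 else 1 := by
  rw [walsh_eq_prod_range (Nat.pow_lt_pow_succ one_lt_two), Finset.prod_range_succ,
    Finset.prod_eq_one fun k hk => ?_]
  · simp
  · simp [Nat.testBit_two_pow_of_ne (Finset.mem_range.1 hk).ne']

lemma walsh_two_pow_add {j m : ℕ} (hm : m < 2 ^ j) (x : G) :
    walsh (2 ^ j + m) x = walsh (2 ^ j) x * walsh m x := by
  have hlt : 2 ^ j + m < 2 ^ (j + 1) := by rw [pow_succ]; omega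
  rw [walsh_eq_prod_range hlt, Finset.prod_range_succ, walsh_eq_prod_range hm, walsh_two_pow,
    mul_comm, Nat.testBit_two_pow_add_eq, Nat.testBit_lt_two_pow hm]
  congr 1
  · simp
  · exact Finset.prod_congr rfl fun k hk => by
      rw [Nat.testBit_two_pow_add_gt (Finset.mem_range.1 hk)]

lemma walsh_eq_one_of_mem_Icyl {m j : ℕ} (hm : m < 2 ^ j) {x : G} (hx : x ∈ Icyl j) :
    walsh m x = 1 := by
  rw [walsh_eq_prod_range hm]
  exact Finset.prod_eq_one fun k hk => by simp [hx k (Finset.mem_range.1 hk)]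

lemma dirichlet_two_pow_add {j m : ℕ} (hm : m ≤ 2 ^ j) (x : G) :
    dirichlet (2 ^ j + m) x = dirichlet (2 ^ j) x + walsh (2 ^ j) x * dirichlet m x := by
  rw [dirichlet, Finset.sum_range_add, dirichlet, dirichlet, Finset.mul_sum]
  exact congrArg _ (Finset.sum_congr rfl fun k hk =>
    walsh_two_pow_add ((Finset.mem_range.1 hk).trans_le hm) x)

lemma dirichlet_two_pow (j : ℕ) (x : G) :
    dirichlet (2 ^ j) x = (Icyl j).indicator (fun _ => 2 ^ j) x := by
  induction j with
  | zero => simp [dirichlet, walsh, Icyl]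
  | succ j ih =>
    rw [pow_succ, mul_two, dirichlet_two_pow_add le_rfl, ih, walsh_two_pow]
    by_cases hx : x ∈ Icyl j <;> rcases zmod_two_eq_zero_or_one (x j) with h | h <;>
      simp [Set.indicator, hx, h, mem_Icyl_succ, pow_succ, mul_two]

lemma walsh_mul_dirichlet_two_pow {m j : ℕ} (hm : m < 2 ^ j) (x : G) :
    walsh m x * dirichlet (2 ^ j) x = dirichlet (2 ^ j) x := by
  by_cases hx : x ∈ Icyl j
  · rw [walsh_eq_one_of_mem_Icyl hm hx, one_mul]
  · rw [dirichlet_two_pow, Set.indicator_of_notMem hx, mul_zero]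

def dyadicKernelSum (n J : ℕ) (x : G) : ℝ :=
  ∑ i ∈ Finset.range J, if n.testBit i then walsh (2 ^ i) x * dirichlet (2 ^ i) x else 0

lemma dirichlet_eq_walsh_mul_dyadicKernelSum {j m : ℕ} (hm : m < 2 ^ j) (x : G) :
    dirichlet m x = walsh m x * dyadicKernelSum m j x := by
  induction j generalizing m with
  | zero => simp [Nat.lt_one_iff.1 hm, dirichlet, dyadicKernelSum]
  | succ j ih =>
    rw [dyadicKernelSum, Finset.sum_range_succ, ← dyadicKernelSum]
    by_cases hmj : m < 2 ^ j
    · rw [Nat.testBit_lt_two_pow hmj, if_neg Bool.false_ne_true, add_zero, ih hmj]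
    obtain ⟨m, rfl⟩ : ∃ m', m = 2 ^ j + m' := ⟨m - 2 ^ j, by omega⟩
    have hm' : m < 2 ^ j := by rw [pow_succ] at hm; omega
    have hbits : dyadicKernelSum (2 ^ j + m) j x = dyadicKernelSum m j x :=
      Finset.sum_congr rfl fun i hi => by
        rw [Nat.testBit_two_pow_add_gt (Finset.mem_range.1 hi)]
    rw [Nat.testBit_two_pow_add_eq, Nat.testBit_lt_two_pow hm', Bool.not_false, if_pos rfl,
      hbits, dirichlet_two_pow_add hm'.le, ih hm', walsh_two_pow_add hm']
    linear_combination -walsh_mul_dirichlet_two_pow hm' x -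
      (walsh m x * dirichlet (2 ^ j) x) * walsh_mul_self (2 ^ j) x

lemma dirichlet_two_pow_add_of_mem_Icyl {i : ℕ} {x s : G} (hs : s ∈ Icyl i) :
    dirichlet (2 ^ i) (x + s) = dirichlet (2 ^ i) x := by
  rw [dirichlet_two_pow, dirichlet_two_pow]
  classical exact if_congr (add_mem_Icyl_iff hs) rfl rfl

lemma dirichlet_add_of_mem_Icyl {N : ℕ} {x s : G} (hx : x ∉ Icyl N) (hs : s ∈ Icyl N) (n : ℕ) :
    dirichlet n (x + s) = walsh n x * walsh n s * dyadicKernelSum n N x := by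
  have hn : n < 2 ^ (N + n) :=
    Nat.lt_two_pow_self.trans_le (Nat.pow_le_pow_right two_pos (Nat.le_add_left n N))
  have hxs : x + s ∉ Icyl N := (add_mem_Icyl_iff hs).not.2 hx
  have htail : ∀ k, dirichlet (2 ^ (N + k)) (x + s) = 0 := fun k => by
    rw [dirichlet_two_pow, Set.indicator_of_notMem fun h => hxs (Icyl_antitone (by omega) h)]
  have hhead : ∀ i < N, walsh (2 ^ i) (x + s) * dirichlet (2 ^ i) (x + s) =
      walsh (2 ^ i) x * dirichlet (2 ^ i) x := fun i hi => by
    rw [walsh_add, walsh_eq_one_of_mem_Icyl (Nat.pow_lt_pow_right one_lt_two hi) hs, mul_one,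
      dirichlet_two_pow_add_of_mem_Icyl (Icyl_antitone hi.le hs)]
  rw [dirichlet_eq_walsh_mul_dyadicKernelSum hn, walsh_add, dyadicKernelSum, Finset.sum_range_add]
  simp only [htail, mul_zero, ite_self, Finset.sum_const_zero, add_zero]
  exact congrArg _ (Finset.sum_congr rfl fun i hi => by rw [hhead i (Finset.mem_range.1 hi)])

def prefixCyl (n : ℕ) (x : G) : Set G := {y : G | ∀ k < n, y k = x k}

lemma measurableSet_prefixCyl (n : ℕ) (x : G) : MeasurableSet (prefixCyl n x) := by
  simp only [prefixCyl, Set.ofPred_forall]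
  exact .iInter fun k => .iInter fun _ =>
    measurableSet_eq_fun (measurable_pi_apply k) measurable_const

def prefixCyls : Set (Set G) := Set.range fun p : ℕ × G => prefixCyl p.1 p.2

lemma prefixCyl_eq_of_mem {n : ℕ} {x z : G} (hz : z ∈ prefixCyl n x) :
    prefixCyl n x = prefixCyl n z :=
  Set.ext fun y => forall₂_congr fun k hk => by rw [hz k hk]

lemma prefixCyl_inter_prefixCyl (n m : ℕ) (z : G) :
    prefixCyl n z ∩ prefixCyl m z = prefixCyl (max n m) z :=
  Set.ext fun _ => by simp [prefixCyl, or_imp, forall_and]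

lemma isPiSystem_prefixCyls : IsPiSystem prefixCyls := by
  rintro _ ⟨⟨n, x⟩, rfl⟩ _ ⟨⟨m, x'⟩, rfl⟩ ⟨z, hzx, hzx'⟩
  refine ⟨⟨max n m, z⟩, ?_⟩
  dsimp only
  rw [prefixCyl_eq_of_mem hzx, prefixCyl_eq_of_mem hzx', prefixCyl_inter_prefixCyl]

lemma generateFrom_prefixCyls : MeasurableSpace.generateFrom prefixCyls = MeasurableSpace.pi := by
  refine le_antisymm (MeasurableSpace.generateFrom_le ?_) (iSup_le fun k => ?_)
  · rintro _ ⟨⟨n, x⟩, rfl⟩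
    exact measurableSet_prefixCyl n x
  refine measurable_iff_comap_le.1 ?_
  let restrict : G → (Fin (k + 1) → ZMod 2) := fun y i => y i
  have h_restrict : Measurable[MeasurableSpace.generateFrom prefixCyls] restrict := by
    let : MeasurableSpace G := .generateFrom prefixCyls
    exact measurable_to_countable' fun v => MeasurableSpace.measurableSet_generateFrom
      ⟨⟨k + 1, fun i => if h : i < k + 1 then v ⟨i, h⟩ else 0⟩, Set.ext fun y => by
        simp +contextual [restrict, prefixCyl, funext_iff, Fin.forall_iff]⟩
  exact (measurable_pi_apply (Fin.last k)).comp h_restrict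

lemma preimage_add_left_prefixCyl (c x : G) (n : ℕ) :
    (fun y => c + y) ⁻¹' prefixCyl n x = prefixCyl n (-c + x) :=
  Set.ext fun _ => forall₂_congr fun _ _ => eq_neg_add_iff_add_eq.symm

namespace IsStdHaar

variable {μ : Measure G}

lemma isProbabilityMeasure (hμ : IsStdHaar μ) : IsProbabilityMeasure μ :=
  ⟨by simpa using hμ 0 0⟩

lemma isAddLeftInvariant (hμ : IsStdHaar μ) : μ.IsAddLeftInvariant := by
  have := hμ.isProbabilityMeasure
  refine ⟨fun c => ext_of_generate_finite _ generateFrom_prefixCyls.symm isPiSystem_prefixCyls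
    ?_ (by simp [Measure.map_apply (measurable_const_add c) .univ])⟩
  rintro _ ⟨⟨n, x⟩, rfl⟩
  rw [Measure.map_apply (measurable_const_add c) (measurableSet_prefixCyl n x),
    preimage_add_left_prefixCyl]
  exact (hμ n _).trans (hμ n x).symm

end IsStdHaar

lemma measurable_walsh (n : ℕ) : Measurable (walsh n) :=
  Finset.measurable_prod _ fun k _ =>
    (Measurable.of_discrete
      (f := fun v : ZMod 2 => if n.testBit k ∧ v = 1 then (-1 : ℝ) else 1)).comp
        (measurable_pi_apply k)

lemma MeasureTheory.Integrable.mul_walsh_comp {α : Type*} [MeasurableSpace α] {ν : Measure α}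
    {f : α → ℝ} (hf : Integrable f ν) {g : α → G} (hg : Measurable g) (n : ℕ) :
    Integrable (fun z => f z * walsh n (g z)) ν :=
  hf.mul_bdd ((measurable_walsh n).comp hg).aestronglyMeasurable
    (ae_of_all _ fun z => (Real.norm_eq_abs _ ▸ abs_walsh n (g z)).le)

lemma dirichlet_add_eq_sum (n : ℕ) (x s : G) :
    dirichlet n (x + s) = ∑ i ∈ Finset.range n, walsh i x * walsh i s :=
  Finset.sum_congr rfl fun i _ => walsh_add i x s

lemma sqPartialSum_eq_integral {μ : Measure G} {a : G × G → ℝ} (ha : Integrable a (μ.prod μ))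
    (n : ℕ) (z : G × G) :
    sqPartialSum μ a n z =
      ∫ w, a w * dirichlet n (z.1 + w.1) * dirichlet n (z.2 + w.2) ∂(μ.prod μ) := by
  have hint : ∀ i j, Integrable (fun w => a w * walsh i w.1 * walsh j w.2) (μ.prod μ) :=
    fun i j => (ha.mul_walsh_comp measurable_fst i).mul_walsh_comp measurable_snd j
  calc sqPartialSum μ a n z
      = ∑ i ∈ Finset.range n, ∑ j ∈ Finset.range n,
          ∫ w, a w * walsh i w.1 * walsh j w.2 * (walsh i z.1 * walsh j z.2) ∂(μ.prod μ) := by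
        refine Finset.sum_congr rfl fun i _ => Finset.sum_congr rfl fun j _ => ?_
        rw [mul_assoc, fourierCoef, ← integral_mul_const]
    _ = ∫ w, ∑ i ∈ Finset.range n, ∑ j ∈ Finset.range n,
          a w * walsh i w.1 * walsh j w.2 * (walsh i z.1 * walsh j z.2) ∂(μ.prod μ) := by
        rw [integral_finsetSum _ fun i _ =>
          integrable_finsetSum _ fun j _ => (hint i j).mul_const _]
        exact Finset.sum_congr rfl fun i _ =>
          (integral_finsetSum _ fun j _ => (hint i j).mul_const _).symm
    _ = ∫ w, a w * dirichlet n (z.1 + w.1) * dirichlet n (z.2 + w.2) ∂(μ.prod μ) := by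
        refine integral_congr_ae (ae_of_all _ fun w => ?_)
        dsimp only
        rw [dirichlet_add_eq_sum, dirichlet_add_eq_sum, mul_assoc, Finset.sum_mul_sum,
          Finset.mul_sum]
        refine Finset.sum_congr rfl fun i _ => ?_
        rw [Finset.mul_sum]
        exact Finset.sum_congr rfl fun j _ => by ring

lemma integral_prod_eq_integral_integral_add_left {H E : Type*} [AddGroup H] [MeasurableSpace H]
    [MeasurableAdd₂ H] [MeasurableNeg H] [NormedAddCommGroup E] [NormedSpace ℝ E]
    {μ : Measure H} [SFinite μ] [μ.IsAddLeftInvariant] {f : H × H → E}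
    (hf : Integrable f (μ.prod μ)) :
    ∫ z, f z ∂(μ.prod μ) = ∫ τ, ∫ t, f (t + τ, t) ∂μ ∂μ := by
  have hshear : MeasurePreserving (MeasurableEquiv.shearAddRight H) (μ.prod μ) (μ.prod μ) :=
    measurePreserving_prod_add μ μ
  have hint : Integrable (fun z => f (MeasurableEquiv.shearAddRight H z).swap) (μ.prod μ) :=
    (hshear.integrable_comp_emb (MeasurableEquiv.measurableEmbedding _)).2 hf.swap
  calc ∫ z, f z ∂(μ.prod μ)
      = ∫ z, f z.swap ∂(μ.prod μ) := (integral_prod_swap f).symm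
    _ = ∫ z, f (MeasurableEquiv.shearAddRight H z).swap ∂(μ.prod μ) :=
        (hshear.integral_comp' fun z => f z.swap).symm
    _ = ∫ τ, ∫ t, f (t + τ, t) ∂μ ∂μ := integral_prod_symm _ hint

lemma fourierCoef_self_eq_integral_integral {μ : Measure G} [SFinite μ] [μ.IsAddLeftInvariant]
    {a : G × G → ℝ} (ha : Integrable a (μ.prod μ)) (n : ℕ) :
    fourierCoef μ a n n = ∫ τ, (∫ t, a (t + τ, t) ∂μ) * walsh n τ ∂μ := by
  have hwalsh : ∀ t τ : G, walsh n (t + τ + t) = walsh n τ := fun t τ => by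
    rw [walsh_add, walsh_add, mul_right_comm, walsh_mul_self, one_mul]
  calc fourierCoef μ a n n = ∫ z, a z * walsh n (z.1 + z.2) ∂(μ.prod μ) := by
        simp only [fourierCoef, walsh_add, mul_assoc]
    _ = ∫ τ, ∫ t, a (t + τ, t) * walsh n τ ∂μ ∂μ := by
        rw [integral_prod_eq_integral_integral_add_left (ha.mul_walsh_comp measurable_add n)]
        simp only [hwalsh]
    _ = ∫ τ, (∫ t, a (t + τ, t) ∂μ) * walsh n τ ∂μ := by
        simp only [integral_mul_const]

theorem sqPartialSum_factorization_general (μ : Measure G) (hμ : IsStdHaar μ)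
    (p : ℝ) (N : ℕ) (a : G × G → ℝ)
    (ha : IsPAtom μ p N a) (n : ℕ) (x y : G) (hx : x ∉ Icyl N) (hy : y ∉ Icyl N) :
    sqPartialSum μ a n (x, y) =
      walsh n (x + y) *
        (∑ i ∈ Finset.range N,
          if n.testBit i then walsh (2 ^ i) x * dirichlet (2 ^ i) x else 0) *
        (∑ j ∈ Finset.range N,
          if n.testBit j then walsh (2 ^ j) y * dirichlet (2 ^ j) y else 0) *
        (∫ τ, (∫ t in Icyl N, a (t + τ, t) ∂μ) * walsh n τ ∂μ) := by
  obtain ⟨ha_meas, ha_supp, -, ha_bdd⟩ := ha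
  have := hμ.isProbabilityMeasure
  have := hμ.isAddLeftInvariant
  have ha_int : Integrable a (μ.prod μ) :=
    .of_bound ha_meas.aestronglyMeasurable _
      (ae_of_all _ fun z => (Real.norm_eq_abs _).trans_le (ha_bdd z))
  have hkernel : ∀ z : G × G, a z * dirichlet n (x + z.1) * dirichlet n (y + z.2) =
      a z * walsh n z.1 * walsh n z.2 *
        (walsh n (x + y) * dyadicKernelSum n N x * dyadicKernelSum n N y) := fun z => by
    by_cases hz : z ∈ Icyl N ×ˢ Icyl N
    · rw [dirichlet_add_of_mem_Icyl hx hz.1, dirichlet_add_of_mem_Icyl hy hz.2, walsh_add]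
      ring
    · simp [ha_supp z hz]
  have hsupport : ∀ τ, ∫ t, a (t + τ, t) ∂μ = ∫ t in Icyl N, a (t + τ, t) ∂μ := fun τ =>
    (setIntegral_eq_integral_of_forall_compl_eq_zero fun _ ht => ha_supp _ fun h => ht h.2).symm
  rw [sqPartialSum_eq_integral ha_int, integral_congr_ae (ae_of_all _ hkernel),
    integral_mul_const, ← fourierCoef, fourierCoef_self_eq_integral_integral ha_int]
  simp only [hsupport, dyadicKernelSum]
  ring

/-- Factorization of `S_{n,n} a` on `I_N^c × I_N^c`. -/
theorem sqPartialSum_factorization (μ : Measure G) (hμ : IsStdHaar μ)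
    (p : ℝ) (hp0 : 0 < p) (hp1 : p < 1) (N : ℕ) (a : G × G → ℝ)
    (ha : IsPAtom μ p N a) (n : ℕ) (x y : G) (hx : x ∉ Icyl N) (hy : y ∉ Icyl N) :
    sqPartialSum μ a n (x, y) =
      walsh n (x + y) *
        (∑ i ∈ Finset.range N,
          if n.testBit i then walsh (2 ^ i) x * dirichlet (2 ^ i) x else 0) *
        (∑ j ∈ Finset.range N,
          if n.testBit j then walsh (2 ^ j) y * dirichlet (2 ^ j) y else 0) *
        (∫ τ, (∫ t in Icyl N, a (t + τ, t) ∂μ) * walsh n τ ∂μ) :=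
  sqPartialSum_factorization_general μ hμ p N a ha n x y hx hy

end
end
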